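/- Every Salajan value d > 1 (i.e., every d in the image of D_S other than 1) is a prime power p^m with p = 2 or p > 3; moreover if p > 3 then ord_9(p^m) = φ(p^m)/2 and ord_9(p) = (p−1)/2, and if additionally m ≥ 2 then 3^{p−1} ≢ 1 (mod p^2). -/

import Mathlib

/-- The Salajan sequence: `u j = (3^j - 5*(-1)^j)/4`. -/
def salajanU (j : ℕ) : ℤ := ((3 : ℤ) ^ j - 5 * (-1) ^ j) / 4

/-- The Salajan discriminator. -/
noncomputable def salajanD (n : ℕ) : ℕ :=
  sInf {m : ℕ | 0 < m ∧ ∀ i j : ℕ, 1 ≤ i → i < j → j ≤ n →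
    ¬ (salajanU i ≡ salajanU j [ZMOD (m : ℤ)])}

/-!
Since `4 (u (i + 2k) - u i) = 3^i (9^k - 1)` and `u j` is even exactly for odd `j`, the 2-adic
valuation of `u (i + g) - u i` is that of `g`. Hence the least power of two `≥ n` separates
`u 1, …, u n`, so `D n ≤ 2n - 2`. On the other hand, writing `d = 2^a 3^b t` with `t` prime to 6,
`u i ≡ u (i + g) [ZMOD d]` for `i = max 1 b` and `g = lcm (2^a) (2 ord_t 9)`, so `n < i + g`.
Comparing the two bounds leaves `d = 2^a`, or `d = t` with `φ t < 4 ord_t 9`. As `2 ord_t 9`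
divides the Carmichael function `λ t`, the latter forces `λ t = φ t`, so `(ZMod t)ˣ` is cyclic
and `t = p^k`, with `2 ord_{p^k} 9 = φ (p^k)`. Since the order of `9` modulo `p^(j+r)` divides
`p^r` times its order modulo `p^j`, the maximal order modulo `p^k` forces maximal order modulo
`p`, and also modulo `p^2`, which excludes `3^(p-1) ≡ 1 [ZMOD p^2]` when `k ≥ 2`.
-/

open ArithmeticFunction
open scoped Nat

theorem four_mul_salajanU (j : ℕ) : 4 * salajanU j = 3 ^ j - 5 * (-1) ^ j := by
  refine Int.mul_ediv_cancel' ?_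
  have h : (4 : ℤ) ∣ 3 ^ j - (-1) ^ j := by
    simpa using sub_dvd_pow_sub_pow (3 : ℤ) (-1) j
  rw [show (3 : ℤ) ^ j - 5 * (-1) ^ j = 3 ^ j - (-1) ^ j - 4 * (-1) ^ j by ring]
  exact h.sub (dvd_mul_right _ _)

theorem salajanU_add_two (j : ℕ) :
    salajanU (j + 2) = 2 * salajanU (j + 1) + 3 * salajanU j := by
  have h := four_mul_salajanU
  refine mul_left_cancel₀ (four_ne_zero (α := ℤ)) ?_
  linear_combination h (j + 2) - 2 * h (j + 1) - 3 * h j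

theorem even_salajanU_iff (j : ℕ) : Even (salajanU j) ↔ Odd j := by
  induction j using Nat.twoStepInduction with
  | zero => decide
  | one => decide
  | more j ih _ =>
    rw [salajanU_add_two, Int.even_add, Int.even_mul, Int.even_mul, ih]
    simp [Nat.odd_add_one, show ¬ Even (3 : ℤ) by decide]

theorem four_mul_salajanU_add_two_mul_sub (i k : ℕ) :
    4 * (salajanU (i + 2 * k) - salajanU i) = 3 ^ i * (9 ^ k - 1) := by
  rw [mul_sub, four_mul_salajanU, four_mul_salajanU, pow_add, pow_add, pow_mul, pow_mul]
  norm_num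
  ring

theorem two_pow_dvd_nine_pow_sub_one_iff (m k : ℕ) :
    (2 : ℤ) ^ m ∣ 9 ^ k - 1 ↔ (2 : ℤ) ^ m ∣ 8 * k := by
  have h := Int.two_pow_sub_pow' (x := 9) (y := 1) k (by norm_num) (by norm_num)
  rw [one_pow, ← emultiplicity_mul Int.prime_two] at h
  rw [pow_dvd_iff_le_emultiplicity, pow_dvd_iff_le_emultiplicity, h]
  norm_num

theorem two_pow_dvd_salajanU_add_sub_iff (a i g : ℕ) :
    (2 : ℤ) ^ a ∣ salajanU (i + g) - salajanU i ↔ 2 ^ a ∣ g := by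
  obtain ⟨k, rfl | rfl⟩ := Nat.even_or_odd' g
  · have h3 : IsCoprime ((2 : ℤ) ^ (a + 2)) (3 ^ i) :=
      IsCoprime.pow (Int.isCoprime_iff_gcd_eq_one.mpr rfl)
    have hcancel : (2 : ℤ) ^ (a + 2) ∣ 3 ^ i * (9 ^ k - 1) ↔ (2 : ℤ) ^ (a + 2) ∣ 9 ^ k - 1 :=
      ⟨h3.dvd_of_dvd_mul_left, fun h => h.mul_left _⟩
    rw [← mul_dvd_mul_iff_left (four_ne_zero (α := ℤ)), four_mul_salajanU_add_two_mul_sub,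
      show (4 : ℤ) * 2 ^ a = 2 ^ (a + 2) by ring,
      hcancel, two_pow_dvd_nine_pow_sub_one_iff, ← Int.natCast_dvd_natCast]
    push_cast
    rw [show (8 : ℤ) * k = 2 ^ 2 * (2 * k) by ring, show (2 : ℤ) ^ (a + 2) = 2 ^ 2 * 2 ^ a by ring,
      mul_dvd_mul_iff_left (by norm_num)]
  · have hodd : Odd (salajanU (i + (2 * k + 1)) - salajanU i) := by
      rw [← Int.not_even_iff_odd, Int.even_sub, even_salajanU_iff, even_salajanU_iff]
      simp [parity_simps, ← Nat.not_even_iff_odd]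
    rcases a with _ | a
    · simp
    · refine iff_of_false (fun h => ?_) (fun h => ?_)
      · exact Int.not_even_iff_odd.mpr hodd
          (even_iff_two_dvd.mpr ((dvd_pow_self 2 a.succ_ne_zero).trans h))
      · exact Nat.not_even_iff_odd.mpr (odd_two_mul_add_one k)
          (even_iff_two_dvd.mpr ((dvd_pow_self 2 a.succ_ne_zero).trans h))

def SalajanDiscriminates (n m : ℕ) : Prop :=
  0 < m ∧ ∀ i j : ℕ, 1 ≤ i → i < j → j ≤ n → ¬ (salajanU i ≡ salajanU j [ZMOD (m : ℤ)])

theorem SalajanDiscriminates.lt_add {n m i g : ℕ} (h : SalajanDiscriminates n m) (hi : 1 ≤ i)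
    (hg : 0 < g) (hdvd : (m : ℤ) ∣ salajanU (i + g) - salajanU i) : n < i + g := by
  by_contra! hle
  exact h.2 i (i + g) hi (by omega) hle (Int.modEq_iff_dvd.mpr hdvd)

theorem salajanDiscriminates_two_pow {n e : ℕ} (hn : n ≤ 2 ^ e) :
    SalajanDiscriminates n (2 ^ e) := by
  refine ⟨by positivity, fun i j hi hij hjn h => ?_⟩
  obtain ⟨g, rfl⟩ := Nat.exists_eq_add_of_lt hij
  have hdvd := (two_pow_dvd_salajanU_add_sub_iff e i (g + 1)).mp (by exact_mod_cast h.dvd)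
  have := Nat.le_of_dvd g.succ_pos hdvd
  omega

theorem salajanDiscriminates_salajanD (n : ℕ) : SalajanDiscriminates n (salajanD n) :=
  Nat.sInf_mem (s := {m | SalajanDiscriminates n m})
    ⟨_, salajanDiscriminates_two_pow Nat.lt_two_pow_self.le⟩

theorem salajanD_le {n m : ℕ} (h : SalajanDiscriminates n m) : salajanD n ≤ m :=
  Nat.sInf_le h

theorem two_le_of_one_lt_salajanD {n : ℕ} (h : 1 < salajanD n) : 2 ≤ n := by
  by_contra! hn
  have := salajanD_le (n := n) ⟨one_pos, fun i j hi hij hjn => by omega⟩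
  omega

theorem salajanD_add_two_le {n : ℕ} (hn : 2 ≤ n) : salajanD n + 2 ≤ 2 * n := by
  have hle := salajanD_le (salajanDiscriminates_two_pow (Nat.le_pow_clog one_lt_two n))
  have hlt := Nat.pow_pred_clog_lt_self one_lt_two hn
  obtain ⟨c, hc⟩ := Nat.exists_eq_succ_of_ne_zero (Nat.clog_pos one_lt_two hn).ne'
  rw [hc, pow_succ] at hle
  rw [hc, Nat.pred_succ] at hlt
  omega

theorem salajanD_add_four_le {n i g : ℕ} (hn : 2 ≤ n) (hi : 1 ≤ i) (hg : 0 < g)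
    (hdvd : (salajanD n : ℤ) ∣ salajanU (i + g) - salajanU i) :
    salajanD n + 4 ≤ 2 * i + 2 * g := by
  have := (salajanDiscriminates_salajanD n).lt_add hi hg hdvd
  have := salajanD_add_two_le hn
  omega

theorem orderOf_intCast_dvd_iff {n k : ℕ} {x : ℤ} :
    orderOf (x : ZMod n) ∣ k ↔ (n : ℤ) ∣ x ^ k - 1 := by
  rw [orderOf_dvd_iff_pow_eq_one, ← ZMod.intCast_zmod_eq_zero_iff_dvd, Int.cast_sub,
    Int.cast_pow, Int.cast_one, sub_eq_zero]

theorem orderOf_nine_dvd_iff {n k : ℕ} : orderOf (9 : ZMod n) ∣ k ↔ (n : ℤ) ∣ 9 ^ k - 1 := by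
  simpa using orderOf_intCast_dvd_iff (n := n) (k := k) (x := 9)

theorem dvd_salajanU_add_sub {a b t i g : ℕ} (ht : Odd t) (hbi : b ≤ i) (ha : 2 ^ a ∣ g)
    (he : 2 * orderOf (9 : ZMod t) ∣ g) :
    ((2 ^ a * 3 ^ b * t : ℕ) : ℤ) ∣ salajanU (i + g) - salajanU i := by
  obtain ⟨k, rfl⟩ := (dvd_mul_right 2 _).trans he
  have hk : (t : ℤ) ∣ 9 ^ k - 1 := orderOf_nine_dvd_iff.mp (Nat.dvd_of_mul_dvd_mul_left two_pos he)
  have hodd : Odd (3 ^ b * t) := (Odd.pow (by decide)).mul ht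
  have h2 : (2 : ℤ) ^ a ∣ salajanU (i + 2 * k) - salajanU i :=
    (two_pow_dvd_salajanU_add_sub_iff a i _).mpr ha
  have h3 : ((3 ^ b * t : ℕ) : ℤ) ∣ salajanU (i + 2 * k) - salajanU i := by
    have hcop : IsCoprime ((3 ^ b * t : ℕ) : ℤ) (4 : ℕ) :=
      Nat.isCoprime_iff_coprime.mpr ((Nat.coprime_two_right.mpr hodd).pow_right 2)
    refine hcop.dvd_of_dvd_mul_left ?_
    push_cast
    rw [four_mul_salajanU_add_two_mul_sub]
    exact mul_dvd_mul (pow_dvd_pow 3 hbi) hk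
  have hcop : IsCoprime ((2 ^ a : ℕ) : ℤ) ((3 ^ b * t : ℕ) : ℤ) :=
    Nat.isCoprime_iff_coprime.mpr ((Nat.coprime_two_left.mpr hodd).pow_left a)
  rw [mul_assoc]
  exact_mod_cast hcop.mul_dvd h2 h3

theorem two_mul_orderOf_sq_dvd_carmichael {n : ℕ} (hn : 2 < n) (x : (ZMod n)ˣ) :
    2 * orderOf (x ^ 2) ∣ carmichael n := by
  have : Fact (1 < n) := ⟨by omega⟩
  have hneg : orderOf (-1 : (ZMod n)ˣ) = 2 := by
    rw [← orderOf_units, Units.coe_neg_one, orderOf_neg_one, ZMod.ringChar_zmod_n,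
      if_neg hn.ne']
  obtain ⟨c, hc⟩ : 2 ∣ carmichael n := hneg ▸ orderOf_dvd_of_pow_eq_one (pow_carmichael _)
  rw [hc]
  exact mul_dvd_mul_left 2 (orderOf_dvd_of_pow_eq_one (by rw [← pow_mul, ← hc, pow_carmichael]))

theorem two_mul_orderOf_nine_dvd_carmichael {t : ℕ} (ht : 2 < t) (h3 : Nat.Coprime 3 t) :
    2 * orderOf (9 : ZMod t) ∣ carmichael t := by
  have h9 : (9 : ZMod t) = ((ZMod.unitOfCoprime 3 h3 ^ 2 : (ZMod t)ˣ) : ZMod t) := by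
    push_cast [ZMod.coe_unitOfCoprime]
    norm_num
  rw [h9, orderOf_units]
  exact two_mul_orderOf_sq_dvd_carmichael ht _

theorem orderOf_nine_pos {t : ℕ} (h3 : Nat.Coprime 3 t) : 0 < orderOf (9 : ZMod t) := by
  have : NeZero t := ⟨by rintro rfl; simp at h3⟩
  refine (isOfFinOrder_iff_isUnit.mpr ?_).orderOf_pos
  simpa using (ZMod.isUnit_iff_coprime 9 t).mpr (h3.pow_left 2)

theorem two_mul_orderOf_nine_lt {t : ℕ} (ht : Odd t) (h3 : Nat.Coprime 3 t) (h1 : 1 < t) :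
    2 * orderOf (9 : ZMod t) < t := by
  have ht2 : 2 < t := by obtain ⟨k, rfl⟩ := ht; omega
  have hdvd := (two_mul_orderOf_nine_dvd_carmichael ht2 h3).trans (carmichael_dvd_totient t)
  exact (Nat.le_of_dvd (Nat.totient_pos.mpr (by omega)) hdvd).trans_lt (Nat.totient_lt t h1)

theorem exists_prime_pow_of_totient_lt {t : ℕ} (ht : Odd t) (h3 : Nat.Coprime 3 t) (h1 : 1 < t)
    (h : φ t < 4 * orderOf (9 : ZMod t)) :
    2 * orderOf (9 : ZMod t) = φ t ∧ ∃ p k, p.Prime ∧ 3 < p ∧ 1 ≤ k ∧ t = p ^ k := by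
  have : NeZero t := ⟨by omega⟩
  have ht2 : 2 < t := by obtain ⟨k, rfl⟩ := ht; omega
  have hord := two_mul_orderOf_nine_dvd_carmichael ht2 h3
  have hcarm := carmichael_dvd_totient t
  have htot : φ t = 2 * orderOf (9 : ZMod t) :=
    Nat.eq_of_dvd_of_lt_two_mul (Nat.totient_pos.mpr (by omega)).ne' (hord.trans hcarm) (by omega)
  have hcyc : IsCyclic (ZMod t)ˣ := by
    rw [IsCyclic.iff_exponent_eq_card, ← carmichael_eq_exponent' t, Nat.card_eq_fintype_card,
      ZMod.card_units_eq_totient]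
    exact Nat.dvd_antisymm hcarm (htot ▸ hord)
  obtain ⟨p, k, hp, hpodd, rfl⟩ := (ZMod.isCyclic_units_iff_of_odd ht).mp hcyc
  have hk : k ≠ 0 := by rintro rfl; simp at h1
  have hp3 : p ≠ 3 := by
    rintro rfl
    exact (Nat.Prime.coprime_iff_not_dvd Nat.prime_three).mp h3 (dvd_pow_self 3 hk)
  have hp2 : p ≠ 2 := hpodd.ne_two_of_dvd_nat dvd_rfl
  exact ⟨htot.symm, p, k, hp, by have := hp.two_le; omega, Nat.one_le_iff_ne_zero.mpr hk, rfl⟩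

theorem pow_add_dvd_sub_pow_of_pow_dvd_sub {R : Type*} [CommRing R] {p j : ℕ} {a b : R}
    (hj : j ≠ 0) (h : (p : R) ^ j ∣ a - b) (r : ℕ) : (p : R) ^ (j + r) ∣ a ^ p ^ r - b ^ p ^ r := by
  induction r with
  | zero => simpa using h
  | succ r ih =>
    have hp : (p : R) ∣ a ^ p ^ r - b ^ p ^ r := (dvd_pow_self _ (by omega)).trans ih
    rw [← add_assoc, pow_succ', pow_succ, pow_mul, pow_mul, ← geom_sum₂_mul]
    exact mul_dvd_mul (dvd_geom_sum₂_self hp) ih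

theorem orderOf_intCast_prime_pow_dvd {p j k : ℕ} (hj : j ≠ 0) (hjk : j ≤ k) (x : ℤ) :
    orderOf (x : ZMod (p ^ k)) ∣ orderOf (x : ZMod (p ^ j)) * p ^ (k - j) := by
  obtain ⟨r, rfl⟩ := Nat.exists_eq_add_of_le hjk
  rw [Nat.add_sub_cancel_left]
  have h := orderOf_intCast_dvd_iff.mp (dvd_refl (orderOf (x : ZMod (p ^ j))))
  push_cast at h
  rw [orderOf_intCast_dvd_iff, pow_mul]
  push_cast
  simpa using pow_add_dvd_sub_pow_of_pow_dvd_sub hj (b := 1) h r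

theorem two_mul_orderOf_nine_prime {p k : ℕ} (hp : p.Prime) (hp3 : 3 < p) (hk : k ≠ 0)
    (h : 2 * orderOf (9 : ZMod (p ^ k)) = φ (p ^ k)) : 2 * orderOf (9 : ZMod p) = p - 1 := by
  have h3 : Nat.Coprime 3 p := (Nat.coprime_primes Nat.prime_three hp).mpr (by omega)
  have hle : 2 * orderOf (9 : ZMod p) ∣ p - 1 := Nat.totient_prime hp ▸
    (two_mul_orderOf_nine_dvd_carmichael (by omega) h3).trans (carmichael_dvd_totient p)
  have hlift :=
    orderOf_intCast_prime_pow_dvd (p := p) one_ne_zero (Nat.one_le_iff_ne_zero.mpr hk) 9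
  rw [pow_one] at hlift
  push_cast at hlift
  have hge : (p - 1) * p ^ (k - 1) ∣ 2 * orderOf (9 : ZMod p) * p ^ (k - 1) := by
    rw [mul_comm, ← Nat.totient_prime_pow hp (Nat.pos_of_ne_zero hk), ← h, mul_assoc]
    exact mul_dvd_mul_left 2 hlift
  exact Nat.dvd_antisymm hle (Nat.dvd_of_mul_dvd_mul_right (by positivity) hge)

theorem not_three_pow_sub_one_modEq_one {p k : ℕ} (hp : p.Prime) (hp3 : 3 < p) (hk : 2 ≤ k)
    (h : 2 * orderOf (9 : ZMod (p ^ k)) = φ (p ^ k)) :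
    ¬ (3 : ℤ) ^ (p - 1) ≡ 1 [ZMOD (p : ℤ) ^ 2] := by
  intro hW
  obtain ⟨f, hf⟩ : ∃ f, p - 1 = 2 * f := (hp.even_sub_one (by omega)).two_dvd
  have h2 : orderOf (9 : ZMod (p ^ 2)) ∣ f := by
    rw [orderOf_nine_dvd_iff, ← Int.modEq_iff_dvd]
    push_cast
    rw [show (9 : ℤ) ^ f = 3 ^ (p - 1) by rw [hf, pow_mul]; norm_num]
    exact hW.symm
  have hpos : 0 < f * p ^ (k - 2) := Nat.mul_pos (by omega) (pow_pos hp.pos _)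
  have hlift := orderOf_intCast_prime_pow_dvd (p := p) two_ne_zero hk 9
  push_cast at hlift
  have hle := Nat.le_of_dvd hpos (hlift.trans (mul_dvd_mul_right h2 _))
  rw [← Nat.mul_le_mul_left_iff two_pos, h, Nat.totient_prime_pow hp (by omega), hf,
    show k - 1 = k - 2 + 1 by omega, pow_succ] at hle
  nlinarith

/-- The bound `salajanD_add_four_le` for `d = 2^a 3^b t`, `e = ord_t 9`, at the collision
`i = max 1 b`, `g = lcm (2^a) (2e)` of `dvd_salajanU_add_sub`. -/
theorem eq_zero_and_of_add_four_le_lcm {a b t e : ℕ} (he : t = 1 ∧ e = 1 ∨ 2 * e < t)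
    (h : 2 ^ a * 3 ^ b * t + 4 ≤ 2 * max 1 b + 2 * Nat.lcm (2 ^ a) (2 * e)) :
    b = 0 ∧ (t = 1 ∨ a = 0 ∧ t + 2 ≤ 4 * e) := by
  have h3b : 2 * b + 1 ≤ 3 ^ b := by
    have := one_add_mul_le_pow (a := (2 : ℤ)) (by norm_num) b
    norm_num at this
    exact_mod_cast (by linarith : (2 * b + 1 : ℤ) ≤ 3 ^ b)
  have ht : 1 ≤ t := by omega
  rcases a with _ | a
  · simp only [pow_zero, one_mul, Nat.lcm_one_left] at h
    rcases Nat.eq_zero_or_pos b with rfl | hb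
    · simp at h; omega
    · rw [max_eq_right hb] at h
      rcases he with ⟨rfl, rfl⟩ | he
      · omega
      · nlinarith [Nat.mul_le_mul_right t h3b]
  · have hlcm : Nat.lcm (2 ^ (a + 1)) (2 * e) * 2 ≤ 2 ^ (a + 1) * (2 * e) := by
      rw [← Nat.gcd_mul_lcm (2 ^ (a + 1)) (2 * e), mul_comm]
      refine Nat.mul_le_mul_right _ (Nat.le_of_dvd (Nat.gcd_pos_of_pos_left _ (by positivity)) ?_)
      exact Nat.dvd_gcd (dvd_pow_self 2 a.succ_ne_zero) (dvd_mul_right 2 e)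
    have hX : 2 ≤ 2 ^ (a + 1) := Nat.le_self_pow a.succ_ne_zero 2
    rcases Nat.eq_zero_or_pos b with rfl | hb
    · simp only [pow_zero, mul_one, max_eq_left zero_le_one] at h
      rcases he with ⟨rfl, rfl⟩ | he
      · simp
      · nlinarith
    · rw [max_eq_right hb] at h
      have h3bX := Nat.mul_le_mul_right t (Nat.mul_le_mul_left (2 ^ (a + 1)) h3b)
      rcases he with ⟨rfl, rfl⟩ | he
      · nlinarith
      · nlinarith [Nat.mul_le_mul_left (2 ^ (a + 1)) he]

theorem Nat.exists_eq_two_pow_mul_three_pow_mul {n : ℕ} (hn : n ≠ 0) :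
    ∃ a b t, Odd t ∧ Nat.Coprime 3 t ∧ n = 2 ^ a * 3 ^ b * t := by
  obtain ⟨a, m, hm, rfl⟩ := Nat.exists_eq_two_pow_mul_odd hn
  obtain ⟨b, t, ht3, rfl⟩ := Nat.exists_eq_pow_mul_and_not_dvd hm.pos.ne' 3 (by norm_num)
  exact ⟨a, b, t, (Nat.odd_mul.mp hm).2, (Nat.Prime.coprime_iff_not_dvd Nat.prime_three).mpr ht3,
    (mul_assoc _ _ _).symm⟩

theorem salajan_value_is_prime_power (d : ℕ) (hd : 1 < d)
    (hval : ∃ n : ℕ, 1 ≤ n ∧ salajanD n = d) :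
    ∃ p m : ℕ, p.Prime ∧ 1 ≤ m ∧ d = p ^ m ∧ (p = 2 ∨ 3 < p) ∧
      (3 < p →
        2 * orderOf (9 : ZMod (p ^ m)) = Nat.totient (p ^ m) ∧
        2 * orderOf (9 : ZMod p) = p - 1 ∧
        (2 ≤ m → ¬ ((3 : ℤ) ^ (p - 1) ≡ 1 [ZMOD (p : ℤ) ^ 2]))) := by
  obtain ⟨n, -, rfl⟩ := hval
  have hn := two_le_of_one_lt_salajanD hd
  obtain ⟨a, b, t, ht, h3, hdt⟩ :=
    Nat.exists_eq_two_pow_mul_three_pow_mul (by omega : salajanD n ≠ 0)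
  have he : t = 1 ∧ orderOf (9 : ZMod t) = 1 ∨ 2 * orderOf (9 : ZMod t) < t := by
    obtain rfl | h1 := eq_or_lt_of_le (show 1 ≤ t from ht.pos)
    · exact Or.inl ⟨rfl, orderOf_eq_one_iff.mpr (Subsingleton.elim _ _)⟩
    · exact Or.inr (two_mul_orderOf_nine_lt ht h3 h1)
  have hcol := salajanD_add_four_le hn (le_max_left 1 b)
    (Nat.lcm_pos (by positivity) (Nat.mul_pos two_pos (orderOf_nine_pos h3)))
    (hdt ▸ dvd_salajanU_add_sub ht (le_max_right 1 b) (Nat.dvd_lcm_left _ _)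
      (Nat.dvd_lcm_right _ _))
  obtain ⟨rfl, rfl | ⟨rfl, hte⟩⟩ := eq_zero_and_of_add_four_le_lcm he (hdt ▸ hcol)
  · simp only [pow_zero, mul_one] at hdt hd
    exact ⟨2, a, Nat.prime_two, Nat.one_le_iff_ne_zero.mpr (Nat.one_lt_two_pow_iff.mp (hdt ▸ hd)),
      hdt, Or.inl rfl, by norm_num⟩
  · simp only [pow_zero, one_mul] at hdt
    obtain ⟨htot, p, k, hp, hp3, hk, rfl⟩ := exists_prime_pow_of_totient_lt ht h3 (hdt ▸ hd)
      (by have := Nat.totient_lt t (hdt ▸ hd); omega)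
    exact ⟨p, k, hp, hk, hdt, Or.inr hp3, fun _ => ⟨htot, two_mul_orderOf_nine_prime hp hp3
      (by omega) htot, fun hk2 => not_three_pow_sub_one_modEq_one hp hp3 hk2 htot⟩⟩
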